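/- For any factorization X = L Rᴴ with L ∈ ℂ^{n×r}, R ∈ ℂ^{m×r}, one has ‖X‖_* ≤ (1/2)(‖L‖_F² + ‖R‖_F²). -/

import Mathlib

open Matrix BigOperators

/-- Frobenius norm of a complex matrix. -/
noncomputable def frobNorm {n m : ℕ} (X : Matrix (Fin n) (Fin m) ℂ) : ℝ :=
  Real.sqrt (∑ i, ∑ j, ‖X i j‖ ^ 2)

/-- Nuclear norm: sum of singular values (square roots of eigenvalues of XᴴX). -/
noncomputable def nuclearNorm {n m : ℕ} (X : Matrix (Fin n) (Fin m) ℂ) : ℝ :=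
  ∑ i, Real.sqrt ((Matrix.isHermitian_conjTranspose_mul_self X).eigenvalues i)

/-!
Let `vᵢ` be an orthonormal eigenbasis of `XᴴX`, with eigenvalues `μᵢ`. The vectors `X vᵢ` are
pairwise orthogonal with `‖X vᵢ‖ = √μᵢ`, so normalising the nonzero ones to `uᵢ` gives
`√μᵢ = ⟪uᵢ, X vᵢ⟫ = ⟪Lᴴ uᵢ, Rᴴ vᵢ⟫ ≤ (‖Lᴴ uᵢ‖² + ‖Rᴴ vᵢ‖²) / 2`. Summing, Bessel's inequality
applied to each column of `L` (resp. `R`) bounds `∑ ‖Lᴴ uᵢ‖²` by `‖L‖_F²` (resp. `∑ ‖Rᴴ vᵢ‖²`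
by `‖R‖_F²`), for any orthonormal families `u` and `v`.
-/

open scoped InnerProductSpace
open LinearMap (adjoint)

section InnerProductSpace

variable {𝕜 E F G ι κ : Type*} [RCLike 𝕜]
  [NormedAddCommGroup E] [InnerProductSpace 𝕜 E]
  [NormedAddCommGroup F] [InnerProductSpace 𝕜 F]
  [NormedAddCommGroup G] [InnerProductSpace 𝕜 G]

theorem orthonormal_normalize_of_pairwise_inner_eq_zero {w : ι → E}
    (hw : Pairwise fun i j => ⟪w i, w j⟫_𝕜 = 0) :
    Orthonormal 𝕜 fun i : {i // w i ≠ 0} => (‖w i‖ : 𝕜)⁻¹ • w i := by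
  refine ⟨fun i => ?_, fun i j hij => ?_⟩
  · rw [norm_smul, norm_inv, RCLike.norm_ofReal, abs_norm,
      inv_mul_cancel₀ (norm_ne_zero_iff.mpr i.2)]
  · dsimp only
    rw [inner_smul_left, inner_smul_right, hw (Subtype.coe_injective.ne hij), mul_zero, mul_zero]

theorem norm_inner_normalize_self (w : E) : ‖⟪(‖w‖ : 𝕜)⁻¹ • w, w⟫_𝕜‖ = ‖w‖ := by
  rw [inner_smul_left, inner_self_eq_norm_sq_to_K, norm_mul, norm_pow, map_inv₀,
    RCLike.conj_ofReal, norm_inv, RCLike.norm_ofReal, abs_norm]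
  rcases eq_or_ne ‖w‖ 0 with h | h
  · simp [h]
  · field_simp

variable [FiniteDimensional 𝕜 E] [FiniteDimensional 𝕜 F]

theorem norm_apply_eq_sqrt_of_adjoint_apply_apply_eq (T : F →ₗ[𝕜] E) {x : F} {μ : ℝ}
    (hx : ‖x‖ = 1) (h : adjoint T (T x) = (μ : 𝕜) • x) : ‖T x‖ = √μ := by
  have hsq : ‖T x‖ ^ 2 = μ := by
    have : (‖T x‖ : 𝕜) ^ 2 = μ := by
      rw [← inner_self_eq_norm_sq_to_K, ← LinearMap.adjoint_inner_right, h, inner_smul_right,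
        inner_self_eq_norm_sq_to_K, hx]
      simp
    exact_mod_cast this
  rw [← hsq, Real.sqrt_sq (norm_nonneg _)]

theorem inner_apply_apply_eq_zero_of_adjoint_apply_apply_eq (T : F →ₗ[𝕜] E) {x y : F} {μ : ℝ}
    (hxy : ⟪x, y⟫_𝕜 = 0) (h : adjoint T (T y) = (μ : 𝕜) • y) : ⟪T x, T y⟫_𝕜 = 0 := by
  rw [← LinearMap.adjoint_inner_right, h, inner_smul_right, hxy, mul_zero]

variable [Fintype ι] [Fintype κ]

theorem Orthonormal.sum_norm_sq_adjoint_le (A : E →ₗ[𝕜] F) (e : OrthonormalBasis κ 𝕜 E)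
    {u : ι → F} (hu : Orthonormal 𝕜 u) :
    ∑ i, ‖adjoint A (u i)‖ ^ 2 ≤ ∑ k, ‖A (e k)‖ ^ 2 :=
  calc ∑ i, ‖adjoint A (u i)‖ ^ 2 = ∑ k, ∑ i, ‖⟪u i, A (e k)⟫_𝕜‖ ^ 2 := by
        rw [Finset.sum_comm]
        refine Finset.sum_congr rfl fun i _ => ?_
        rw [← e.sum_sq_norm_inner_right]
        simp_rw [LinearMap.adjoint_inner_right, norm_inner_symm]
    _ ≤ ∑ k, ‖A (e k)‖ ^ 2 := Finset.sum_le_sum fun k _ => hu.sum_inner_products_le _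

variable [FiniteDimensional 𝕜 G]

theorem sum_norm_inner_comp_adjoint_le (A : G →ₗ[𝕜] E) (B : G →ₗ[𝕜] F)
    (e : OrthonormalBasis κ 𝕜 G) {u : ι → E} {v : ι → F} (hu : Orthonormal 𝕜 u)
    (hv : Orthonormal 𝕜 v) :
    ∑ i, ‖⟪u i, A (adjoint B (v i))⟫_𝕜‖ ≤
      (1 / 2) * (∑ k, ‖A (e k)‖ ^ 2 + ∑ k, ‖B (e k)‖ ^ 2) := by
  have hterm : ∀ i, ‖⟪u i, A (adjoint B (v i))⟫_𝕜‖ ≤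
      (1 / 2) * (‖adjoint A (u i)‖ ^ 2 + ‖adjoint B (v i)‖ ^ 2) := fun i =>
    calc ‖⟪u i, A (adjoint B (v i))⟫_𝕜‖ = ‖⟪adjoint A (u i), adjoint B (v i)⟫_𝕜‖ := by
          rw [LinearMap.adjoint_inner_left]
      _ ≤ ‖adjoint A (u i)‖ * ‖adjoint B (v i)‖ := norm_inner_le_norm _ _
      _ ≤ _ := by nlinarith [two_mul_le_add_sq ‖adjoint A (u i)‖ ‖adjoint B (v i)‖]
  calc ∑ i, ‖⟪u i, A (adjoint B (v i))⟫_𝕜‖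
      ≤ ∑ i, (1 / 2) * (‖adjoint A (u i)‖ ^ 2 + ‖adjoint B (v i)‖ ^ 2) :=
        Finset.sum_le_sum fun i _ => hterm i
    _ = (1 / 2) * (∑ i, ‖adjoint A (u i)‖ ^ 2 + ∑ i, ‖adjoint B (v i)‖ ^ 2) := by
        rw [← Finset.mul_sum, Finset.sum_add_distrib]
    _ ≤ _ := by
        gcongr
        · exact hu.sum_norm_sq_adjoint_le A e
        · exact hv.sum_norm_sq_adjoint_le B e

theorem sum_sqrt_le_half_sum_norm_sq (A : G →ₗ[𝕜] E) (B : G →ₗ[𝕜] F)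
    (e : OrthonormalBasis κ 𝕜 G) (b : OrthonormalBasis ι 𝕜 F) {μ : ι → ℝ}
    (hb : ∀ i, adjoint (A ∘ₗ adjoint B) ((A ∘ₗ adjoint B) (b i)) = (μ i : 𝕜) • b i) :
    ∑ i, √(μ i) ≤ (1 / 2) * (∑ k, ‖A (e k)‖ ^ 2 + ∑ k, ‖B (e k)‖ ^ 2) := by
  classical
  set T := A ∘ₗ adjoint B
  have horth : Pairwise fun i j => ⟪T (b i), T (b j)⟫_𝕜 = 0 := fun i j hij =>
    inner_apply_apply_eq_zero_of_adjoint_apply_apply_eq T (b.orthonormal.2 hij) (hb j)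
  have hzero : ∑ i : {i // ¬T (b i) ≠ 0}, ‖T (b i)‖ = 0 :=
    Finset.sum_eq_zero fun i _ => by rw [not_not.mp i.2, norm_zero]
  calc ∑ i, √(μ i) = ∑ i, ‖T (b i)‖ := by
        simp_rw [norm_apply_eq_sqrt_of_adjoint_apply_apply_eq T (b.orthonormal.1 _) (hb _)]
    _ = ∑ i : {i // T (b i) ≠ 0}, ‖T (b i)‖ := by
        rw [← Fintype.sum_subtype_add_sum_subtype (fun i => T (b i) ≠ 0), hzero, add_zero]
    _ = ∑ i : {i // T (b i) ≠ 0}, ‖⟪(‖T (b i)‖ : 𝕜)⁻¹ • T (b i), T (b i)⟫_𝕜‖ := by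
        simp_rw [norm_inner_normalize_self]
    _ ≤ _ := sum_norm_inner_comp_adjoint_le A B e
        (orthonormal_normalize_of_pairwise_inner_eq_zero horth)
        (b.orthonormal.comp _ Subtype.val_injective)

end InnerProductSpace

namespace Matrix

variable {𝕜 m n r : Type*} [RCLike 𝕜] [Fintype m] [Fintype n] [DecidableEq n]

theorem sum_norm_sq_toEuclideanLin_basisFun (M : Matrix m n 𝕜) :
    ∑ k, ‖toEuclideanLin M (EuclideanSpace.basisFun n 𝕜 k)‖ ^ 2 = ∑ i, ∑ j, ‖M i j‖ ^ 2 := by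
  simp_rw [EuclideanSpace.norm_sq_eq, EuclideanSpace.basisFun_apply, toLpLin_apply,
    PiLp.ofLp_single, mulVec_single_one, col_apply]
  exact Finset.sum_comm

theorem adjoint_toEuclideanLin_apply_eigenvectorBasis [DecidableEq m] (X : Matrix m n 𝕜)
    (i : n) :
    adjoint (toEuclideanLin X)
        (toEuclideanLin X ((isHermitian_conjTranspose_mul_self X).eigenvectorBasis i)) =
      ((isHermitian_conjTranspose_mul_self X).eigenvalues i : 𝕜) •
        (isHermitian_conjTranspose_mul_self X).eigenvectorBasis i := by
  rw [← toEuclideanLin_conjTranspose_eq_adjoint, ← LinearMap.comp_apply, ← toLpLin_mul_same,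
    toLpLin_apply, (isHermitian_conjTranspose_mul_self X).mulVec_eigenvectorBasis,
    RCLike.real_smul_eq_coe_smul (K := 𝕜), WithLp.toLp_smul, WithLp.toLp_ofLp]

theorem sum_sqrt_eigenvalues_of_mul_conjTranspose_le [DecidableEq m] [Fintype r]
    [DecidableEq r] (L : Matrix m r 𝕜) (R : Matrix n r 𝕜) :
    ∑ i, √((isHermitian_conjTranspose_mul_self (L * Rᴴ)).eigenvalues i) ≤
      (1 / 2) * (∑ i, ∑ j, ‖L i j‖ ^ 2 + ∑ i, ∑ j, ‖R i j‖ ^ 2) := by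
  have hb := adjoint_toEuclideanLin_apply_eigenvectorBasis (L * Rᴴ)
  rw [toLpLin_mul_same, toEuclideanLin_conjTranspose_eq_adjoint] at hb
  simpa only [sum_norm_sq_toEuclideanLin_basisFun] using
    sum_sqrt_le_half_sum_norm_sq _ _ (EuclideanSpace.basisFun r 𝕜) _ hb

end Matrix

theorem sq_frobNorm {n m : ℕ} (X : Matrix (Fin n) (Fin m) ℂ) :
    frobNorm X ^ 2 = ∑ i, ∑ j, ‖X i j‖ ^ 2 :=
  Real.sq_sqrt (by positivity)

/-- For any factorization `X = L Rᴴ`, one has `‖X‖_* ≤ (1/2)(‖L‖_F² + ‖R‖_F²)`. -/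
theorem nuclearNorm_le_half_sq_factors {n m r : ℕ}
    (L : Matrix (Fin n) (Fin r) ℂ) (R : Matrix (Fin m) (Fin r) ℂ) :
    nuclearNorm (L * Rᴴ) ≤ (1 / 2) * (frobNorm L ^ 2 + frobNorm R ^ 2) := by
  rw [sq_frobNorm, sq_frobNorm]
  exact sum_sqrt_eigenvalues_of_mul_conjTranspose_le L R
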